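/- Let c_m := m! times the coefficient of x^m in the formal power series expansion over ℚ of 2·(1 + exp(−x))⁻¹ (so c_0 = 1, c_1 = 1/2, c_2 = 0, c_3 = −1/4, …). Then for every integer n ≥ 0, the identity α^{2n+1} + (1−α)^{2n+1} = Σ_{i=0}^{n} c_{2i+1} · C(2n+1, 2i+1) · ( α^{2n−2i} + (1−α)^{2n−2i} ) holds as an identity of polynomials in α over ℚ, where C(·,·) denotes the binomial coefficient. -/

import Mathlib

/-!
Let `G(x) = 2 / (1 + e^{-x})`. Then `G(x) + G(-x) = 2`, so `G - 1` is odd: `c 0 = 1` and `c m = 0`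
for the other even `m`. For `F(x) = e^{αx} + e^{(1-α)x}` one has `F(-x) = e^{-x} F(x)`, and since
`e^{-x} G = 2 - G`, the series `F · (2 - G)` is even. Hence the odd coefficients of `G · F` are twice
those of `F`; multiplied by `N!`, this reads
`∑ m ≤ N, c m · C(N, m) · (α^(N-m) + (1-α)^(N-m)) = 2 (α^N + (1-α)^N)` for odd `N`, and removing the
even `m` leaves the identity.
-/

noncomputable section

open PowerSeries

/-- `c m` is `m!` times the coefficient of `x^m` in the power series expansion of
`2/(1 + exp(-x))` over `ℚ`. -/
def c (m : ℕ) : ℚ :=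
  (m.factorial : ℚ) *
    PowerSeries.coeff m (2 * (1 + PowerSeries.rescale (-1) (PowerSeries.exp ℚ))⁻¹)

open Finset Nat

section Parity

variable {R : Type*} [CommRing R] [IsAddTorsionFree R] {f : R⟦X⟧} {n : ℕ}

theorem PowerSeries.coeff_eq_zero_of_rescale_neg_one_eq_self (hf : rescale (-1) f = f)
    (hn : Odd n) : coeff n f = 0 := by
  have h := congrArg (coeff n) hf
  rwa [coeff_rescale, hn.neg_one_pow, neg_one_mul, neg_eq_self] at h

theorem PowerSeries.coeff_eq_zero_of_rescale_neg_one_eq_neg (hf : rescale (-1) f = -f)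
    (hn : Even n) : coeff n f = 0 := by
  have h := congrArg (coeff n) hf
  rwa [coeff_rescale, hn.neg_one_pow, one_mul, map_neg, self_eq_neg] at h

end Parity

theorem PowerSeries.constantCoeff_rescale {R : Type*} [CommSemiring R] (a : R) (f : R⟦X⟧) :
    constantCoeff (rescale a f) = constantCoeff f := by
  rw [← coeff_zero_eq_constantCoeff_apply, coeff_rescale, pow_zero, one_mul,
    coeff_zero_eq_constantCoeff_apply]

theorem Finset.sum_range_two_mul {M : Type*} [AddCommMonoid M] (f : ℕ → M) (n : ℕ) :
    ∑ m ∈ range (2 * n), f m = ∑ i ∈ range n, (f (2 * i) + f (2 * i + 1)) := by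
  induction n with
  | zero => simp
  | succ n ih => rw [mul_add_one, sum_range_succ, sum_range_succ, sum_range_succ, ih, add_assoc]

def twiceLogistic : ℚ⟦X⟧ := 2 * (1 + rescale (-1) (exp ℚ))⁻¹

theorem c_eq_factorial_mul_coeff_twiceLogistic (m : ℕ) :
    c m = m ! * coeff m twiceLogistic := rfl

theorem one_add_exp_neg_mul_twiceLogistic :
    (1 + rescale (-1) (exp ℚ)) * twiceLogistic = 2 := by
  rw [twiceLogistic, mul_left_comm, PowerSeries.mul_inv_cancel, mul_one]
  simp [constantCoeff_rescale]

theorem rescale_neg_one_twiceLogistic : rescale (-1) twiceLogistic = 2 - twiceLogistic := by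
  have hG := one_add_exp_neg_mul_twiceLogistic
  have hexp : exp ℚ * rescale (-1) (exp ℚ) = 1 := exp_mul_exp_neg_eq_one
  have hrescale : (1 + exp ℚ) * rescale (-1) twiceLogistic = 2 := by
    simpa [rescale_rescale, map_ofNat] using congrArg (rescale (-1)) hG
  have hne : 1 + exp ℚ ≠ 0 := fun h => by
    have := congrArg constantCoeff h
    norm_num at this
  apply mul_left_cancel₀ hne
  rw [hrescale]
  linear_combination exp ℚ * hG - twiceLogistic * hexp

theorem c_zero : c 0 = 1 := by
  have h := congrArg constantCoeff one_add_exp_neg_mul_twiceLogistic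
  rw [map_mul, map_add, map_one, constantCoeff_rescale, constantCoeff_exp, map_ofNat] at h
  rw [c_eq_factorial_mul_coeff_twiceLogistic, factorial_zero, cast_one, one_mul,
    coeff_zero_eq_constantCoeff_apply]
  linarith

theorem c_eq_zero_of_even {m : ℕ} (hm : Even m) (h0 : m ≠ 0) : c m = 0 := by
  have hodd : rescale (-1) (twiceLogistic - 1) = -(twiceLogistic - 1) := by
    rw [map_sub, map_one, rescale_neg_one_twiceLogistic]
    ring
  have h := coeff_eq_zero_of_rescale_neg_one_eq_neg hodd hm
  rw [map_sub, coeff_one, if_neg h0, sub_zero] at h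
  rw [c_eq_factorial_mul_coeff_twiceLogistic, h, mul_zero]

section RatAlgebra

variable {A : Type*} [CommRing A] [Algebra ℚ A]

def expAddExpOneSub (a : A) : A⟦X⟧ := rescale a (exp A) + rescale (1 - a) (exp A)

theorem rescale_neg_one_expAddExpOneSub (a : A) :
    rescale (-1) (expAddExpOneSub a) = rescale (-1) (exp A) * expAddExpOneSub a := by
  rw [expAddExpOneSub, map_add, rescale_rescale, rescale_rescale, mul_add, exp_mul_exp_eq_exp_add,
    exp_mul_exp_eq_exp_add, add_comm]
  congr 3 <;> ring

theorem factorial_mul_coeff_expAddExpOneSub (a : A) (k : ℕ) :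
    (k ! : A) * coeff k (expAddExpOneSub a) = a ^ k + (1 - a) ^ k := by
  have hinv : algebraMap ℚ A k ! * algebraMap ℚ A (1 / k !) = 1 := by
    rw [← map_mul, mul_one_div_cancel (by positivity), map_one]
  rw [expAddExpOneSub, map_add, coeff_rescale, coeff_rescale, coeff_exp,
    ← map_natCast (algebraMap ℚ A)]
  linear_combination (a ^ k + (1 - a) ^ k) * hinv

theorem one_add_exp_neg_mul_map_twiceLogistic :
    (1 + rescale (-1) (exp A)) * twiceLogistic.map (algebraMap ℚ A) = 2 := by
  simpa [← rescale_map, map_exp, map_ofNat] using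
    congrArg (map (algebraMap ℚ A)) one_add_exp_neg_mul_twiceLogistic

theorem rescale_neg_one_map_twiceLogistic :
    rescale (-1) (twiceLogistic.map (algebraMap ℚ A)) =
      2 - twiceLogistic.map (algebraMap ℚ A) := by
  simpa [← rescale_map, map_ofNat] using
    congrArg (map (algebraMap ℚ A)) rescale_neg_one_twiceLogistic

theorem coeff_map_twiceLogistic_mul_expAddExpOneSub (a : A) {N : ℕ} (hN : Odd N) :
    coeff N (twiceLogistic.map (algebraMap ℚ A) * expAddExpOneSub a) =
      2 * coeff N (expAddExpOneSub a) := by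
  set G := twiceLogistic.map (algebraMap ℚ A)
  set F := expAddExpOneSub a
  have := IsAddTorsionFree.of_module_rat A
  have heven : rescale (-1) (F * (2 - G)) = F * (2 - G) := by
    rw [map_mul, rescale_neg_one_expAddExpOneSub, map_sub, map_ofNat,
      rescale_neg_one_map_twiceLogistic]
    linear_combination F * one_add_exp_neg_mul_map_twiceLogistic (A := A)
  have h := coeff_eq_zero_of_rescale_neg_one_eq_self heven hN
  rw [mul_sub, mul_comm F 2, ← map_ofNat C 2, map_sub, coeff_C_mul, mul_comm F G] at h
  exact (sub_eq_zero.mp h).symm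

theorem factorial_mul_coeff_map_twiceLogistic_mul_expAddExpOneSub (a : A) (N : ℕ) :
    (N ! : A) * coeff N (twiceLogistic.map (algebraMap ℚ A) * expAddExpOneSub a) =
      ∑ m ∈ range (N + 1),
        algebraMap ℚ A (c m) * (N.choose m : A) * (a ^ (N - m) + (1 - a) ^ (N - m)) := by
  rw [coeff_mul, Finset.Nat.sum_antidiagonal_eq_sum_range_succ_mk, mul_sum]
  refine sum_congr rfl fun m hm => ?_
  have hfac : (N.choose m * m ! * (N - m)! : A) = N ! := by
    rw [← cast_mul, ← cast_mul, choose_mul_factorial_mul_factorial (mem_range_succ_iff.mp hm)]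
  rw [← factorial_mul_coeff_expAddExpOneSub, coeff_map, c_eq_factorial_mul_coeff_twiceLogistic,
    map_mul, map_natCast]
  linear_combination
    (-algebraMap ℚ A (coeff m twiceLogistic) * coeff (N - m) (expAddExpOneSub a)) * hfac

theorem sum_c_mul_choose_mul_pow_add_one_sub_pow_of_odd (a : A) {N : ℕ} (hN : Odd N) :
    ∑ m ∈ range (N + 1),
        algebraMap ℚ A (c m) * (N.choose m : A) * (a ^ (N - m) + (1 - a) ^ (N - m)) =
      2 * (a ^ N + (1 - a) ^ N) := by
  rw [← factorial_mul_coeff_map_twiceLogistic_mul_expAddExpOneSub,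
    coeff_map_twiceLogistic_mul_expAddExpOneSub a hN, ← factorial_mul_coeff_expAddExpOneSub]
  ring

theorem pow_add_one_sub_pow_eq_sum_c_mul_choose (a : A) (n : ℕ) :
    a ^ (2 * n + 1) + (1 - a) ^ (2 * n + 1) =
      ∑ i ∈ range (n + 1), algebraMap ℚ A (c (2 * i + 1)) * ((2 * n + 1).choose (2 * i + 1) : A) *
        (a ^ (2 * n - 2 * i) + (1 - a) ^ (2 * n - 2 * i)) := by
  have h := sum_c_mul_choose_mul_pow_add_one_sub_pow_of_odd a (odd_two_mul_add_one n)
  rw [show 2 * n + 1 + 1 = 2 * (n + 1) by ring, sum_range_two_mul, sum_add_distrib,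
    sum_eq_single 0] at h
  · simp only [mul_zero, c_zero, map_one, choose_zero_right, cast_one, one_mul, tsub_zero,
      Nat.add_sub_add_right] at h
    linear_combination -h
  · intro i _ hi
    rw [c_eq_zero_of_even (even_two_mul i) (by omega), map_zero, zero_mul, zero_mul]
  · simp

end RatAlgebra

/-- For every `n ≥ 0`, the polynomial identity
`α^{2n+1} + (1-α)^{2n+1} = Σ_{i=0}^{n} c_{2i+1}·C(2n+1,2i+1)·(α^{2n-2i} + (1-α)^{2n-2i})`
holds over `ℚ`. -/
theorem odd_power_sum_identity (n : ℕ) :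
    (Polynomial.X : Polynomial ℚ) ^ (2 * n + 1) + (1 - Polynomial.X) ^ (2 * n + 1) =
      ∑ i ∈ Finset.range (n + 1),
        Polynomial.C (c (2 * i + 1)) * ((2 * n + 1).choose (2 * i + 1) : Polynomial ℚ) *
          ((Polynomial.X : Polynomial ℚ) ^ (2 * n - 2 * i) +
            (1 - Polynomial.X) ^ (2 * n - 2 * i)) :=
  pow_add_one_sub_pow_eq_sum_c_mul_choose Polynomial.X n
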